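/- arXiv:2411.13806 — 4 statements merged into one kernel-verified Lean document; each statement's English description precedes it below -/
import Mathlib

section
/- Let L be a Laplacian with k-dimensional kernel spanned by vectors w_1,…,w_k of the canonical form (nonnegative first block β_i, all-ones in the (i+1)-st block, zero elsewhere). For each i, let S_i be the support of w_i and L_{S_i} the principal submatrix of L indexed by S_i. Then rank(L_{S_i}) = |S_i| - 1. -/
/-!
Extending a kernel vector of `L_{Sᵢ}` by zero gives a kernel vector of `L`: rows inside `Sᵢ`
are the equations of `L_{Sᵢ}`, and a row `v ∉ Sᵢ` has no entries in the columns of `Sᵢ`, because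
`(L wᵢ)_v = ∑_u L_{vu} (wᵢ)_u` is a sum of nonpositive terms (`L` is a Z-matrix, `wᵢ ≥ 0`,
`(wᵢ)_v = 0`) that vanishes. A kernel vector of `L` supported on `Sᵢ` is zero on the blocks
`j ≠ i`, constant `c` on block `i` by the kernel of `Lᵢ`, and its first block is then forced by
the invertibility of `L₀`, so it is `c • wᵢ`. Rank–nullity gives the rank `|Sᵢ| - 1`.
-/

open Matrix

namespace Matrix

variable {n K : Type*} [Fintype n] [Field K]

theorem rank_eq_card_sub_one_of_ker_eq_span {A : Matrix n n K} {v : n → K} (hv : v ≠ 0)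
    (hker : LinearMap.ker A.mulVecLin = K ∙ v) : A.rank = Fintype.card n - 1 := by
  have hrn := LinearMap.finrank_range_add_finrank_ker A.mulVecLin
  rw [hker, finrank_span_singleton hv, Module.finrank_fintype_fun_eq_card] at hrn
  rw [Matrix.rank]
  omega

variable {ι R : Type*} [Fintype ι]

theorem submatrix_val_mulVec_of_support_subset [NonUnitalNonAssocSemiring R]
    {p : ι → Prop} [DecidablePred p] (L : Matrix ι ι R) {x : ι → R}
    (hx : ∀ v, ¬ p v → x v = 0) :
    (L.submatrix Subtype.val Subtype.val : Matrix {v // p v} {v // p v} R) *ᵥ (fun u => x u) =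
      fun u : {v // p v} => (L *ᵥ x) u := by
  funext u
  simp only [mulVec, dotProduct, submatrix_apply]
  rw [← Fintype.sum_subtype_add_sum_subtype p (fun v => L u v * x v),
    Fintype.sum_eq_zero (fun v : {v // ¬ p v} => L u v * x v) fun v => by rw [hx v v.2, mul_zero],
    add_zero]

variable [Field R] [LinearOrder R] [IsStrictOrderedRing R] {L : Matrix ι ι R} {w : ι → R}

theorem apply_eq_zero_of_mulVec_eq_zero_of_nonneg (hoff : ∀ a b, a ≠ b → L a b ≤ 0)
    (hw : ∀ a, 0 ≤ w a) (hLw : L *ᵥ w = 0) {v u : ι} (hv : ¬ 0 < w v) (hu : 0 < w u) :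
    L v u = 0 := by
  have hterm : ∀ t, L v t * w t ≤ 0 := fun t => by
    rcases eq_or_ne v t with rfl | hvt
    · rw [le_antisymm (not_lt.1 hv) (hw v), mul_zero]
    · exact mul_nonpos_of_nonpos_of_nonneg (hoff v t hvt) (hw t)
  have hzero := (Fintype.sum_eq_zero_iff_of_nonpos hterm).1 (congrFun hLw v)
  exact (mul_eq_zero.1 (congrFun hzero u)).resolve_right hu.ne'

theorem ker_submatrix_support_eq_span (hoff : ∀ a b, a ≠ b → L a b ≤ 0)
    (hw : ∀ a, 0 ≤ w a) (hLw : L *ᵥ w = 0)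
    (huniq : ∀ x, L *ᵥ x = 0 → (∀ v, ¬ 0 < w v → x v = 0) → ∃ c : R, x = c • w) :
    LinearMap.ker
        (L.submatrix Subtype.val Subtype.val : Matrix {v // 0 < w v} {v // 0 < w v} R).mulVecLin =
      R ∙ fun u : {v // 0 < w v} => w u := by
  apply le_antisymm
  · intro y hy
    set x : ι → R := fun v => if h : 0 < w v then y ⟨v, h⟩ else 0
    have hx : ∀ v, ¬ 0 < w v → x v = 0 := fun v h => dif_neg h
    have hxy : (fun u : {v // 0 < w v} => x u) = y := funext fun u => dif_pos u.2
    have hLx : L *ᵥ x = 0 := by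
      funext v
      by_cases hv : 0 < w v
      · have h := congrFun (submatrix_val_mulVec_of_support_subset (p := (0 < w ·)) L hx)
          ⟨v, hv⟩
        rw [hxy] at h
        exact h.symm.trans (congrFun (LinearMap.mem_ker.1 hy) _)
      · refine Finset.sum_eq_zero fun u _ => ?_
        change L v u * x u = 0
        by_cases hu : 0 < w u
        · rw [apply_eq_zero_of_mulVec_eq_zero_of_nonneg hoff hw hLw hv hu, zero_mul]
        · rw [hx u hu, mul_zero]
    obtain ⟨c, hc⟩ := huniq x hLx hx
    refine Submodule.mem_span_singleton.2 ⟨c, ?_⟩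
    rw [← hxy, hc]
    rfl
  · rw [Submodule.span_le, Set.singleton_subset_iff, SetLike.mem_coe, LinearMap.mem_ker,
      mulVecLin_apply, submatrix_val_mulVec_of_support_subset L
        fun v h => le_antisymm (not_lt.1 h) (hw v), hLw]
    rfl

theorem rank_submatrix_support (hoff : ∀ a b, a ≠ b → L a b ≤ 0)
    (hw : ∀ a, 0 ≤ w a) (hLw : L *ᵥ w = 0)
    (huniq : ∀ x, L *ᵥ x = 0 → (∀ v, ¬ 0 < w v → x v = 0) → ∃ c : R, x = c • w) :
    (L.submatrix Subtype.val Subtype.val : Matrix {v // 0 < w v} {v // 0 < w v} R).rank =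
      Fintype.card {v // 0 < w v} - 1 := by
  rcases isEmpty_or_nonempty {v // 0 < w v} with hS | ⟨⟨u⟩⟩
  · have hrank := rank_le_card_width
      (L.submatrix Subtype.val Subtype.val : Matrix {v // 0 < w v} {v // 0 < w v} R)
    rw [Fintype.card_eq_zero] at hrank ⊢
    omega
  · refine rank_eq_card_sub_one_of_ker_eq_span ?_
      (ker_submatrix_support_eq_span hoff hw hLw huniq)
    exact fun h => u.2.ne' (congrFun h u)

end Matrix

section BlockForm

variable {ι κ R : Type*} [Fintype ι] [DecidableEq κ] {α : κ → Type*} [∀ j, Fintype (α j)]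
  [Field R]

/-- `ι` indexes the vertices outside the basic bicomponents, `α j` the `j`-th basic
bicomponent. -/
structure IsCanonicalBlockForm (L : Matrix (ι ⊕ Σ j, α j) (ι ⊕ Σ j, α j) R)
    (L0 : Matrix ι ι R) (L0i : ∀ j, Matrix ι (α j) R) (Lblk : ∀ j, Matrix (α j) (α j) R) :
    Prop where
  inl_inl : ∀ a b, L (Sum.inl a) (Sum.inl b) = L0 a b
  inl_inr : ∀ a j b, L (Sum.inl a) (Sum.inr ⟨j, b⟩) = L0i j a b
  inr_inl : ∀ j a b, L (Sum.inr ⟨j, a⟩) (Sum.inl b) = 0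
  inr_inr : ∀ j a j' b, L (Sum.inr ⟨j, a⟩) (Sum.inr ⟨j', b⟩) =
    if h : j = j' then Lblk j a (h ▸ b) else 0

noncomputable def canonicalKerVec [DecidableEq ι] (L0 : Matrix ι ι R)
    (L0i : ∀ j, Matrix ι (α j) R) (i : κ) : ι ⊕ (Σ j, α j) → R :=
  Sum.elim ((-(L0⁻¹ * L0i i)) *ᵥ fun _ => 1) fun q => if q.1 = i then 1 else 0

theorem mulVec_canonicalKerVec_comp_inl [DecidableEq ι] {L0 : Matrix ι ι R}
    {L0i : ∀ j, Matrix ι (α j) R} (hL0 : IsUnit L0.det) (i : κ) :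
    L0 *ᵥ (canonicalKerVec L0 L0i i ∘ Sum.inl) = -(L0i i *ᵥ fun _ => 1) := by
  rw [canonicalKerVec, Sum.elim_comp_inl, mulVec_mulVec, Matrix.mul_neg,
    mul_nonsing_inv_cancel_left _ _ hL0, neg_mulVec]

namespace IsCanonicalBlockForm

variable [Fintype κ] {L : Matrix (ι ⊕ Σ j, α j) (ι ⊕ Σ j, α j) R} {L0 : Matrix ι ι R}
  {L0i : ∀ j, Matrix ι (α j) R} {Lblk : ∀ j, Matrix (α j) (α j) R}

theorem mulVec_inl (hL : IsCanonicalBlockForm L L0 L0i Lblk) (x : ι ⊕ (Σ j, α j) → R)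
    (a : ι) :
    (L *ᵥ x) (Sum.inl a) =
      (L0 *ᵥ (x ∘ Sum.inl)) a + ∑ j, (L0i j *ᵥ fun b => x (Sum.inr ⟨j, b⟩)) a := by
  simp only [mulVec, dotProduct, Fintype.sum_sum_type, Fintype.sum_sigma, hL.inl_inl,
    hL.inl_inr, Function.comp]

theorem mulVec_inr (hL : IsCanonicalBlockForm L L0 L0i Lblk) (x : ι ⊕ (Σ j, α j) → R)
    (j : κ) (a : α j) :
    (L *ᵥ x) (Sum.inr ⟨j, a⟩) = (Lblk j *ᵥ fun b => x (Sum.inr ⟨j, b⟩)) a := by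
  simp only [mulVec, dotProduct, Fintype.sum_sum_type, Fintype.sum_sigma,
    hL.inr_inl, hL.inr_inr, zero_mul, Finset.sum_const_zero, zero_add, dite_mul]
  rw [Finset.sum_eq_single j (fun j' _ hj' => Finset.sum_eq_zero fun b _ => dif_neg hj'.symm)
    (fun h => absurd (Finset.mem_univ j) h)]
  exact Finset.sum_congr rfl fun b _ => dif_pos rfl

theorem mulVec_inl_of_eq_zero_off (hL : IsCanonicalBlockForm L L0 L0i Lblk) {i : κ}
    {x : ι ⊕ (Σ j, α j) → R} (hx : ∀ j ≠ i, ∀ b, x (Sum.inr ⟨j, b⟩) = 0) (a : ι) :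
    (L *ᵥ x) (Sum.inl a) =
      (L0 *ᵥ (x ∘ Sum.inl)) a + (L0i i *ᵥ fun b => x (Sum.inr ⟨i, b⟩)) a := by
  rw [hL.mulVec_inl, Finset.sum_eq_single i (fun j _ hj => ?_)
    (fun h => absurd (Finset.mem_univ i) h)]
  rw [show (fun b => x (Sum.inr ⟨j, b⟩)) = 0 from funext (hx j hj), mulVec_zero, Pi.zero_apply]

variable [DecidableEq ι]

theorem mulVec_canonicalKerVec (hL : IsCanonicalBlockForm L L0 L0i Lblk)
    (hL0 : IsUnit L0.det) {i : κ} (hker : LinearMap.ker (Lblk i).mulVecLin = R ∙ fun _ => 1) :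
    L *ᵥ canonicalKerVec L0 L0i i = 0 := by
  have hone : (fun _ => (1 : R)) ∈ LinearMap.ker (Lblk i).mulVecLin :=
    hker ▸ Submodule.mem_span_singleton_self _
  funext v
  rcases v with a | ⟨j, b⟩
  · rw [hL.mulVec_inl_of_eq_zero_off (i := i) (fun j hj b => if_neg hj),
      mulVec_canonicalKerVec_comp_inl hL0]
    simp [canonicalKerVec]
  · rw [hL.mulVec_inr]
    by_cases hj : j = i
    · subst hj
      simpa [canonicalKerVec] using congrFun hone b
    · simp [canonicalKerVec, hj, ← Pi.zero_def]

theorem eq_smul_canonicalKerVec (hL : IsCanonicalBlockForm L L0 L0i Lblk)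
    (hL0 : IsUnit L0.det) {i : κ} (hker : LinearMap.ker (Lblk i).mulVecLin = R ∙ fun _ => 1)
    {x : ι ⊕ (Σ j, α j) → R} (hLx : L *ᵥ x = 0) (hx : ∀ j ≠ i, ∀ b, x (Sum.inr ⟨j, b⟩) = 0) :
    ∃ c : R, x = c • canonicalKerVec L0 L0i i := by
  have hblock : (fun b => x (Sum.inr ⟨i, b⟩)) ∈ LinearMap.ker (Lblk i).mulVecLin :=
    funext fun a => (hL.mulVec_inr x i a).symm.trans (congrFun hLx _)
  rw [hker] at hblock
  obtain ⟨c, hc⟩ := Submodule.mem_span_singleton.1 hblock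
  have htop : x ∘ Sum.inl = c • (canonicalKerVec L0 L0i i ∘ Sum.inl) := by
    apply mulVec_injective_iff_isUnit.2 ((isUnit_iff_isUnit_det L0).2 hL0)
    have hrow : L0 *ᵥ (x ∘ Sum.inl) = -(L0i i *ᵥ fun b => x (Sum.inr ⟨i, b⟩)) :=
      funext fun a => eq_neg_of_add_eq_zero_left
        ((hL.mulVec_inl_of_eq_zero_off hx a).symm.trans (congrFun hLx _))
    rw [hrow, ← hc, mulVec_smul, mulVec_smul, mulVec_canonicalKerVec_comp_inl hL0, smul_neg]
  refine ⟨c, funext fun v => ?_⟩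
  rcases v with a | ⟨j, b⟩
  · exact congrFun htop a
  · by_cases hj : j = i
    · subst hj
      simpa [canonicalKerVec] using (congrFun hc b).symm
    · simp [canonicalKerVec, hj, hx j hj b]

end IsCanonicalBlockForm

end BlockForm

theorem stmt_10_general {M0 k : ℕ} {M : Fin k → ℕ}
    (L0 : Matrix (Fin M0) (Fin M0) ℝ) (hL0 : IsUnit L0.det)
    (L0i : ∀ i : Fin k, Matrix (Fin M0) (Fin (M i)) ℝ)
    (Lblk : ∀ i : Fin k, Matrix (Fin (M i)) (Fin (M i)) ℝ)
    (hLblk : ∀ i, LinearMap.ker (Matrix.toLin' (Lblk i)) =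
      Submodule.span ℝ {(fun _ => 1 : Fin (M i) → ℝ)})
    (L : Matrix (Fin M0 ⊕ (Σ i : Fin k, Fin (M i)))
                (Fin M0 ⊕ (Σ i : Fin k, Fin (M i))) ℝ)
    (hoff : ∀ a b, a ≠ b → L a b ≤ 0)
    (h11 : ∀ a b, L (Sum.inl a) (Sum.inl b) = L0 a b)
    (h12 : ∀ a i b, L (Sum.inl a) (Sum.inr ⟨i, b⟩) = L0i i a b)
    (h21 : ∀ i a b, L (Sum.inr ⟨i, a⟩) (Sum.inl b) = 0)
    (h22 : ∀ i a j b, L (Sum.inr ⟨i, a⟩) (Sum.inr ⟨j, b⟩) =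
      if h : i = j then Lblk i a (h ▸ b) else 0)
    (i : Fin k)
    (w : (Fin M0 ⊕ (Σ j : Fin k, Fin (M j))) → ℝ)
    (hw : w = Sum.elim ((-(L0⁻¹ * L0i i)).mulVec (fun _ => 1))
      (fun q => if q.1 = i then (1 : ℝ) else 0))
    (hwpos : ∀ a, 0 ≤ w a) :
    (L.submatrix (Subtype.val : {v // 0 < w v} → _)
        (Subtype.val : {v // 0 < w v} → _)).rank
      = Fintype.card {v // 0 < w v} - 1 := by
  have hL : IsCanonicalBlockForm L L0 L0i Lblk := ⟨h11, h12, h21, h22⟩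
  have hw : w = canonicalKerVec L0 L0i i := hw
  subst hw
  refine rank_submatrix_support hoff hwpos (hL.mulVec_canonicalKerVec hL0 (hLblk i))
    fun x hLx hx => hL.eq_smul_canonicalKerVec hL0 (hLblk i) hLx fun j hj b => hx _ ?_
  simp [canonicalKerVec, hj]

/-- For a Laplacian `L` in canonical block form with `k` basic bicomponents,
the principal submatrix indexed by the support `Sᵢ` of the `i`-th canonical
kernel vector `wᵢ` has rank `|Sᵢ| - 1`. -/
theorem stmt_10 {M0 k : ℕ} {M : Fin k → ℕ}
    (L0 : Matrix (Fin M0) (Fin M0) ℝ) (hL0 : IsUnit L0.det)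
    (L0i : ∀ i : Fin k, Matrix (Fin M0) (Fin (M i)) ℝ)
    (Lblk : ∀ i : Fin k, Matrix (Fin (M i)) (Fin (M i)) ℝ)
    (hLblk : ∀ i, LinearMap.ker (Matrix.toLin' (Lblk i)) =
      Submodule.span ℝ {(fun _ => 1 : Fin (M i) → ℝ)})
    (L : Matrix (Fin M0 ⊕ (Σ i : Fin k, Fin (M i)))
                (Fin M0 ⊕ (Σ i : Fin k, Fin (M i))) ℝ)
    (hoff : ∀ a b, a ≠ b → L a b ≤ 0)
    (hrowsum : ∀ a, ∑ b, L a b = 0)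
    (h11 : ∀ a b, L (Sum.inl a) (Sum.inl b) = L0 a b)
    (h12 : ∀ a i b, L (Sum.inl a) (Sum.inr ⟨i, b⟩) = L0i i a b)
    (h21 : ∀ i a b, L (Sum.inr ⟨i, a⟩) (Sum.inl b) = 0)
    (h22 : ∀ i a j b, L (Sum.inr ⟨i, a⟩) (Sum.inr ⟨j, b⟩) =
      if h : i = j then Lblk i a (h ▸ b) else 0)
    (i : Fin k)
    (w : (Fin M0 ⊕ (Σ j : Fin k, Fin (M j))) → ℝ)
    (hw : w = Sum.elim ((-(L0⁻¹ * L0i i)).mulVec (fun _ => 1))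
      (fun q => if q.1 = i then (1 : ℝ) else 0))
    (hwpos : ∀ a, 0 ≤ w a) :
    (L.submatrix (Subtype.val : {v // 0 < w v} → _)
        (Subtype.val : {v // 0 < w v} → _)).rank
      = Fintype.card {v // 0 < w v} - 1 :=
  stmt_10_general L0 hL0 L0i Lblk hLblk L hoff h11 h12 h21 h22 i w hw hwpos
end

section
/- Let L ∈ ℝ^{N×N} be a Laplacian with canonical kernel vectors w_1,…,w_k as above, and define B ∈ ℝ^{M_0×N'} (N' = Σ_{i=1}^k M_i) blockwise by B having (j,i)-block β_{j,i} M_i^{-1} 𝟏_{M_i}^T. Then ker L ⊆ ker(-I_{M_0} | B), and consequently there exists a matrix V with VL = (-I_{M_0} | B). -/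
/-!
If `L x = 0`, the rows of the basic bicomponents give `Lᵢ xᵢ = 0`, so `x` is constant,
say `cᵢ`, on the `i`-th bicomponent; the remaining rows then force `x₀ = ∑ᵢ cᵢ βᵢ`.
Row `j` of `(-I | B)` averages each block `xᵢ` and weights it by `β_{j,i}`, so it sends `x`
to `-x₀ j + ∑ᵢ cᵢ β_{j,i} = 0`.
Over a field, a linear map vanishing on `ker f` factors through `f`, which gives `V`.
-/

open Matrix

open LinearMap in
theorem LinearMap.exists_comp_eq_of_ker_le {K V₁ V₂ V₃ : Type*} [DivisionRing K]
    [AddCommGroup V₁] [AddCommGroup V₂] [AddCommGroup V₃]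
    [Module K V₁] [Module K V₂] [Module K V₃]
    {f : V₁ →ₗ[K] V₂} {g : V₁ →ₗ[K] V₃} (h : ker f ≤ ker g) :
    ∃ v : V₂ →ₗ[K] V₃, v ∘ₗ f = g := by
  obtain ⟨v, hv⟩ := IsSemisimpleModule.extension_property ((ker f).liftQ f le_rfl)
    (ker_eq_bot.mp ((ker f).ker_liftQ_eq_bot' f rfl)) ((ker f).liftQ g h)
  exact ⟨v, LinearMap.ext fun x => congr($hv (Submodule.Quotient.mk x))⟩

namespace Matrix

theorem exists_mul_eq_of_ker_toLin'_le {K m n p : Type*} [Field K] [Fintype m] [Fintype n]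
    [DecidableEq m] [DecidableEq n] {A : Matrix m n K} {B : Matrix p n K}
    (h : LinearMap.ker A.toLin' ≤ LinearMap.ker B.toLin') :
    ∃ V : Matrix p m K, V * A = B := by
  obtain ⟨v, hv⟩ := LinearMap.exists_comp_eq_of_ker_le h
  refine ⟨LinearMap.toMatrix' v, ?_⟩
  simpa [LinearMap.toMatrix'_comp] using congr(LinearMap.toMatrix' $hv)

variable {m ι : Type*} {κ : ι → Type*} [Fintype m] [Fintype ι] [∀ i, Fintype (κ i)]

section Semiring

variable {R : Type*} [NonUnitalNonAssocSemiring R]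

theorem mulVec_inl_of_blocks {L : Matrix (m ⊕ Σ i, κ i) (m ⊕ Σ i, κ i) R}
    {L0 : Matrix m m R} {L0i : ∀ i, Matrix m (κ i) R}
    (h11 : ∀ a b, L (.inl a) (.inl b) = L0 a b)
    (h12 : ∀ a i b, L (.inl a) (.inr ⟨i, b⟩) = L0i i a b)
    (x : m ⊕ (Σ i, κ i) → R) (a : m) :
    (L *ᵥ x) (.inl a) =
      (L0 *ᵥ fun b => x (.inl b)) a + ∑ i, (L0i i *ᵥ fun b => x (.inr ⟨i, b⟩)) a := by
  simp only [mulVec, dotProduct, Fintype.sum_sum_type, Fintype.sum_sigma, h11, h12]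

theorem mulVec_inr_of_blocks [DecidableEq ι] {L : Matrix (m ⊕ Σ i, κ i) (m ⊕ Σ i, κ i) R}
    {Lblk : ∀ i, Matrix (κ i) (κ i) R}
    (h21 : ∀ i a b, L (.inr ⟨i, a⟩) (.inl b) = 0)
    (h22 : ∀ i a j b, L (.inr ⟨i, a⟩) (.inr ⟨j, b⟩) =
      if h : i = j then Lblk i a (h ▸ b) else 0)
    (x : m ⊕ (Σ i, κ i) → R) (i : ι) (a : κ i) :
    (L *ᵥ x) (.inr ⟨i, a⟩) = (Lblk i *ᵥ fun b => x (.inr ⟨i, b⟩)) a := by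
  simp [mulVec, dotProduct, Fintype.sum_sum_type, Fintype.sum_sigma, h21, h22]

end Semiring

variable {K : Type*} [Field K]

theorem exists_blocks_eq_const_of_mulVec_eq_zero [DecidableEq ι] [∀ i, DecidableEq (κ i)]
    {L : Matrix (m ⊕ Σ i, κ i) (m ⊕ Σ i, κ i) K} {Lblk : ∀ i, Matrix (κ i) (κ i) K}
    (hLblk : ∀ i, LinearMap.ker (Lblk i).toLin' = Submodule.span K {fun _ => 1})
    (h21 : ∀ i a b, L (.inr ⟨i, a⟩) (.inl b) = 0)
    (h22 : ∀ i a j b, L (.inr ⟨i, a⟩) (.inr ⟨j, b⟩) =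
      if h : i = j then Lblk i a (h ▸ b) else 0)
    {x : m ⊕ (Σ i, κ i) → K} (hx : L *ᵥ x = 0) :
    ∃ c : ι → K, ∀ i b, x (.inr ⟨i, b⟩) = c i := by
  have hblk (i : ι) : ∃ c : K, c • (fun _ => 1) = fun b => x (.inr ⟨i, b⟩) := by
    rw [← Submodule.mem_span_singleton, ← hLblk, LinearMap.mem_ker, toLin'_apply]
    funext a
    rw [← mulVec_inr_of_blocks h21 h22, hx, Pi.zero_apply, Pi.zero_apply]
  choose c hc using hblk
  exact ⟨c, fun i b => by simpa using (congrFun (hc i) b).symm⟩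

theorem inl_eq_sum_of_mulVec_eq_zero [DecidableEq m]
    {L : Matrix (m ⊕ Σ i, κ i) (m ⊕ Σ i, κ i) K}
    {L0 : Matrix m m K} {L0i : ∀ i, Matrix m (κ i) K} (hL0 : IsUnit L0.det)
    (h11 : ∀ a b, L (.inl a) (.inl b) = L0 a b)
    (h12 : ∀ a i b, L (.inl a) (.inr ⟨i, b⟩) = L0i i a b)
    {x : m ⊕ (Σ i, κ i) → K} (hx : L *ᵥ x = 0) {c : ι → K}
    (hc : ∀ i b, x (.inr ⟨i, b⟩) = c i) :
    (fun a => x (.inl a)) = ∑ i, c i • (-(L0⁻¹ * L0i i) *ᵥ fun _ => 1) := by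
  have hrow : L0 *ᵥ (fun a => x (.inl a)) = -∑ i, c i • (L0i i *ᵥ fun _ => 1) := by
    have hconst (i : ι) : (fun b => x (.inr ⟨i, b⟩)) = c i • fun _ => 1 :=
      funext fun b => by simp [hc]
    funext a
    have := mulVec_inl_of_blocks h11 h12 x a
    simp only [hx, hconst, mulVec_smul, Pi.zero_apply] at this
    simp only [Pi.neg_apply, Finset.sum_apply]
    linear_combination -this
  calc (fun a => x (.inl a)) = L0⁻¹ *ᵥ (L0 *ᵥ fun a => x (.inl a)) := by
        rw [mulVec_mulVec, nonsing_inv_mul L0 hL0, one_mulVec]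
    _ = _ := by
        simp only [hrow, mulVec_neg, mulVec_sum, mulVec_smul, mulVec_mulVec, neg_mulVec,
          Finset.sum_neg_distrib, smul_neg]

theorem mulVec_eq_neg_add_sum_of_blocks_eq_const [CharZero K] [DecidableEq m]
    {B : Matrix m (m ⊕ Σ i, κ i) K}
    {L0 : Matrix m m K} {L0i : ∀ i, Matrix m (κ i) K}
    (hB1 : ∀ j a, B j (.inl a) = if a = j then -1 else 0)
    (hB2 : ∀ j i b, B j (.inr ⟨i, b⟩) =
      (-(L0⁻¹ * L0i i) *ᵥ fun _ => 1) j / Fintype.card (κ i))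
    {x : m ⊕ (Σ i, κ i) → K} {c : ι → K} (hc : ∀ i b, x (.inr ⟨i, b⟩) = c i)
    (j : m) :
    (B *ᵥ x) j = -x (.inl j) + ∑ i, c i * (-(L0⁻¹ * L0i i) *ᵥ fun _ => 1) j := by
  have hblock (i : ι) : ∑ b : κ i, B j (.inr ⟨i, b⟩) * x (.inr ⟨i, b⟩) =
      c i * (-(L0⁻¹ * L0i i) *ᵥ fun _ => 1) j := by
    rcases isEmpty_or_nonempty (κ i) with _ | _
    · -- an empty block has `βᵢ = 0`, so dividing by its size `0` is harmless
      simp [mulVec, dotProduct]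
    · simp only [hB2, hc, Finset.sum_const, Finset.card_univ, nsmul_eq_mul]
      field_simp
  simp [mulVec, dotProduct, Fintype.sum_sum_type, Fintype.sum_sigma, hblock, hB1]

end Matrix

/-- With `L` in canonical block form and `B` the `M₀ × (∑ Mᵢ)` matrix whose
`(j,i)`-block is `β_{j,i} Mᵢ⁻¹ 𝟏ᵀ`, we have `ker L ⊆ ker(-I | B)` and hence
there exists `V` with `V L = (-I | B)`. -/
theorem stmt_12 {M0 k : ℕ} {M : Fin k → ℕ}
    (L0 : Matrix (Fin M0) (Fin M0) ℝ) (hL0 : IsUnit L0.det)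
    (L0i : ∀ i : Fin k, Matrix (Fin M0) (Fin (M i)) ℝ)
    (Lblk : ∀ i : Fin k, Matrix (Fin (M i)) (Fin (M i)) ℝ)
    (hLblk : ∀ i, LinearMap.ker (Matrix.toLin' (Lblk i)) =
      Submodule.span ℝ {(fun _ => 1 : Fin (M i) → ℝ)})
    (L : Matrix (Fin M0 ⊕ (Σ i : Fin k, Fin (M i)))
                (Fin M0 ⊕ (Σ i : Fin k, Fin (M i))) ℝ)
    (h11 : ∀ a b, L (Sum.inl a) (Sum.inl b) = L0 a b)
    (h12 : ∀ a i b, L (Sum.inl a) (Sum.inr ⟨i, b⟩) = L0i i a b)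
    (h21 : ∀ i a b, L (Sum.inr ⟨i, a⟩) (Sum.inl b) = 0)
    (h22 : ∀ i a j b, L (Sum.inr ⟨i, a⟩) (Sum.inr ⟨j, b⟩) =
      if h : i = j then Lblk i a (h ▸ b) else 0)
    (Bfull : Matrix (Fin M0) (Fin M0 ⊕ (Σ i : Fin k, Fin (M i))) ℝ)
    (hB1 : ∀ j a, Bfull j (Sum.inl a) = if a = j then (-1 : ℝ) else 0)
    (hB2 : ∀ j i b, Bfull j (Sum.inr ⟨i, b⟩) =
      ((-(L0⁻¹ * L0i i)).mulVec (fun _ => 1) j) / (M i : ℝ)) :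
    LinearMap.ker (Matrix.toLin' L) ≤ LinearMap.ker (Matrix.toLin' Bfull) ∧
    ∃ V : Matrix (Fin M0) (Fin M0 ⊕ (Σ i : Fin k, Fin (M i))) ℝ,
      V * L = Bfull := by
  have hker : LinearMap.ker (toLin' L) ≤ LinearMap.ker (toLin' Bfull) := by
    intro x hx
    rw [LinearMap.mem_ker, toLin'_apply] at hx ⊢
    obtain ⟨c, hc⟩ := exists_blocks_eq_const_of_mulVec_eq_zero hLblk h21 h22 hx
    have hx0 := inl_eq_sum_of_mulVec_eq_zero hL0 h11 h12 hx hc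
    funext j
    rw [mulVec_eq_neg_add_sum_of_blocks_eq_const hB1 (by simpa using hB2) hc, congrFun hx0 j]
    simp [Finset.sum_apply]
  exact ⟨hker, exists_mul_eq_of_ker_toLin'_le hker⟩
end

section
/- Let L be the Laplacian of a directed graph without a directed spanning tree, so L has k ≥ 2 basic bicomponents. Suppose trajectories y_j : ℝ≥0 → ℝ^p satisfy (L ⊗ I_p) y(t) → 0, and within each basic bicomponent i the outputs converge to a common trajectory y^i_s. Then every agent j not in any basic bicomponent satisfies y_j(t) - Σ_{i=1}^k β_{j,i} y^i_s(t) → 0 as t → ∞, where the coefficients β_{j,i} ≥ 0 sum to 1 over i and depend only on L. -/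
/-!
Write `L₀` for the grounded block and `L₀ᵢ` for the coupling of the non-basic agents to the
`i`-th basic bicomponent. Since `L` is a Z-matrix with zero row sums, `L₀` is a nonsingular
Z-matrix with nonnegative row sums, hence `L₀⁻¹ ≥ 0` entrywise; together with `L₀ᵢ ≤ 0` this
gives `βᵢ = -L₀⁻¹ L₀ᵢ 𝟏 ≥ 0`, and the zero row sums give `∑ᵢ βᵢ = L₀⁻¹ L₀ 𝟏 = 𝟏`.
For the trajectories, `y₀ - ∑ᵢ βᵢ yˢᵢ = L₀⁻¹ (L₀ y₀ + ∑ᵢ L₀ᵢ 𝟏 yˢᵢ)`, and the bracket is the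
first block row of `L y` up to `∑ᵢ L₀ᵢ (yᵢ - 𝟏 yˢᵢ)`; both tend to zero.
-/

open Filter Matrix
open scoped NNReal Topology

theorem Filter.Tendsto.const_matrix_mulVec {α m n : Type*} [Fintype n] {l : Filter α}
    {f : α → n → ℝ} {x : n → ℝ} (hf : Tendsto f l (𝓝 x)) (C : Matrix m n ℝ) :
    Tendsto (fun t => C *ᵥ f t) l (𝓝 (C *ᵥ x)) :=
  ((continuous_const.matrix_mulVec continuous_id).tendsto x).comp hf

namespace Matrix

section ZMatrix

variable {n : Type*} [Fintype n] [DecidableEq n]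

theorem det_ne_zero_of_offDiag_nonpos_of_sum_row_pos {B : Matrix n n ℝ}
    (hoff : ∀ a b, a ≠ b → B a b ≤ 0) (hrow : ∀ a, 0 < ∑ b, B a b) : B.det ≠ 0 := by
  refine det_ne_zero_of_sum_row_lt_diag fun a => ?_
  have hnorm : ∑ b ∈ Finset.univ.erase a, ‖B a b‖ = -∑ b ∈ Finset.univ.erase a, B a b := by
    rw [← Finset.sum_neg_distrib]
    exact Finset.sum_congr rfl fun b hb =>
      abs_of_nonpos (hoff a b (Finset.ne_of_mem_erase hb).symm)
  have hsplit := Finset.add_sum_erase Finset.univ (B a) (Finset.mem_univ a)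
  rw [hnorm, Real.norm_eq_abs]
  linarith [hrow a, le_abs_self (B a a)]

/-- Minimum principle: at a row `m` where the `j`-th column `v` of `B⁻¹` is minimal,
`0 ≤ (B v)ₘ ≤ (∑_b B m b) vₘ`, so `vₘ ≥ 0`. -/
theorem inv_apply_nonneg_of_offDiag_nonpos_of_sum_row_pos {B : Matrix n n ℝ}
    (hoff : ∀ a b, a ≠ b → B a b ≤ 0) (hrow : ∀ a, 0 < ∑ b, B a b) (i j : n) :
    0 ≤ B⁻¹ i j := by
  by_contra! hneg
  set v : n → ℝ := fun a => B⁻¹ a j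
  obtain ⟨m, -, hm⟩ := Finset.exists_min_image Finset.univ v ⟨i, Finset.mem_univ i⟩
  have hvm : v m < 0 := (hm i (Finset.mem_univ i)).trans_lt hneg
  have hunit : IsUnit B.det := (det_ne_zero_of_offDiag_nonpos_of_sum_row_pos hoff hrow).isUnit
  have hBv : 0 ≤ ∑ b, B m b * v b := by
    change 0 ≤ (B * B⁻¹) m j
    rw [mul_nonsing_inv B hunit, one_apply]
    split_ifs <;> norm_num
  have hle : ∑ b, B m b * v b ≤ (∑ b, B m b) * v m := by
    rw [Finset.sum_mul]
    refine Finset.sum_le_sum fun b _ => ?_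
    rcases eq_or_ne b m with rfl | hbm
    · rfl
    · exact mul_le_mul_of_nonpos_left (hm b (Finset.mem_univ b)) (hoff m b hbm.symm)
  linarith [mul_neg_of_pos_of_neg (hrow m) hvm]

/-- `A` is the limit of `A + ε • 1` as `ε → 0⁺`; these have positive row sums, and inversion
is continuous at the nonsingular `A`. -/
theorem inv_apply_nonneg_of_offDiag_nonpos_of_sum_row_nonneg {A : Matrix n n ℝ}
    (hA : IsUnit A.det) (hoff : ∀ a b, a ≠ b → A a b ≤ 0) (hrow : ∀ a, 0 ≤ ∑ b, A a b)
    (i j : n) : 0 ≤ A⁻¹ i j := by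
  have hcont : ContinuousAt (fun ε : ℝ => (A + ε • 1)⁻¹ i j) 0 := by
    have hinv : ContinuousAt Inv.inv (A + (0 : ℝ) • 1) := by
      refine continuousAt_matrix_inv _ ?_
      rw [zero_smul, add_zero]
      exact NormedRing.inverse_continuousAt hA.unit
    have hpath : Continuous fun ε : ℝ => A + ε • (1 : Matrix n n ℝ) := by fun_prop
    exact (continuous_apply_apply i j).continuousAt.comp
      (hinv.comp (f := fun ε : ℝ => A + ε • 1) hpath.continuousAt)
  have hlim := hcont.continuousWithinAt (s := Set.Ioi 0) |>.tendsto
  rw [zero_smul, add_zero] at hlim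
  refine ge_of_tendsto hlim ?_
  filter_upwards [self_mem_nhdsWithin] with ε (hε : 0 < ε)
  refine inv_apply_nonneg_of_offDiag_nonpos_of_sum_row_pos (fun a b hab => ?_) (fun a => ?_) i j
  · simpa [one_apply_ne hab] using hoff a b hab
  · simpa [Finset.sum_add_distrib, one_apply] using add_pos_of_nonneg_of_pos (hrow a) hε

end ZMatrix

section Grounded

variable {n ι : Type*} [Fintype n] [DecidableEq n] {m : ι → Type*} [∀ i, Fintype (m i)]

/-- With `A = L₀` and `B = L₀ᵢ`, `groundedWeight A B i j` is the paper's `β_{j,i}`. -/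
noncomputable def groundedWeight (A : Matrix n n ℝ) (B : ∀ i, Matrix n (m i) ℝ) (i : ι) :
    n → ℝ :=
  (-(A⁻¹ * B i)) *ᵥ 1

theorem groundedWeight_eq (A : Matrix n n ℝ) (B : ∀ i, Matrix n (m i) ℝ) (i : ι) :
    groundedWeight A B i = A⁻¹ *ᵥ -(B i *ᵥ 1) := by
  rw [groundedWeight, neg_mulVec, ← mulVec_mulVec, mulVec_neg]

theorem sum_groundedWeight [Fintype ι] {A : Matrix n n ℝ} {B : ∀ i, Matrix n (m i) ℝ}
    (hA : IsUnit A.det) (hrow : A *ᵥ 1 + ∑ i, B i *ᵥ 1 = 0) :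
    ∑ i, groundedWeight A B i = 1 := by
  rw [Finset.sum_congr rfl fun i _ => groundedWeight_eq A B i, ← mulVec_sum,
    Finset.sum_neg_distrib, ← eq_neg_of_add_eq_zero_left hrow, mulVec_mulVec,
    nonsing_inv_mul _ hA, one_mulVec]

theorem groundedWeight_nonneg [Fintype ι] {A : Matrix n n ℝ} {B : ∀ i, Matrix n (m i) ℝ}
    (hA : IsUnit A.det) (hoff : ∀ a b, a ≠ b → A a b ≤ 0) (hB : ∀ i a b, B i a b ≤ 0)
    (hrow : A *ᵥ 1 + ∑ i, B i *ᵥ 1 = 0) (i : ι) (j : n) : 0 ≤ groundedWeight A B i j := by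
  have hBrow : ∀ i a, (B i *ᵥ 1) a ≤ 0 := fun i a =>
    Finset.sum_nonpos fun b _ => by simpa using hB i a b
  have hArow : ∀ a, 0 ≤ ∑ b, A a b := fun a => by
    have hsum : ∑ b, A a b + ∑ i, (B i *ᵥ 1) a = 0 := by
      simpa [mulVec, dotProduct] using congrFun hrow a
    linarith [Finset.sum_nonpos fun i (_ : i ∈ Finset.univ) => hBrow i a]
  rw [groundedWeight_eq]
  exact Finset.sum_nonneg fun c _ => mul_nonneg
    (inv_apply_nonneg_of_offDiag_nonpos_of_sum_row_nonneg hA hoff hArow j c)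
    (neg_nonneg.2 (hBrow i c))

theorem sub_sum_smul_groundedWeight [Fintype ι] {A : Matrix n n ℝ} (B : ∀ i, Matrix n (m i) ℝ)
    (hA : IsUnit A.det) (x : n → ℝ) (w : ι → ℝ) :
    x - ∑ i, w i • groundedWeight A B i = A⁻¹ *ᵥ (A *ᵥ x + ∑ i, B i *ᵥ (w i • 1)) := by
  simp only [groundedWeight, mulVec_add, mulVec_mulVec, nonsing_inv_mul _ hA, one_mulVec,
    mulVec_sum, mulVec_smul, neg_mulVec, smul_neg, Finset.sum_neg_distrib, sub_eq_add_neg,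
    neg_neg]

theorem tendsto_sub_sum_smul_groundedWeight [Fintype ι] {α : Type*} {l : Filter α}
    {A : Matrix n n ℝ} {B : ∀ i, Matrix n (m i) ℝ} (hA : IsUnit A.det) {x : α → n → ℝ}
    {z : ∀ i, α → m i → ℝ} {w : ι → α → ℝ}
    (hlim : Tendsto (fun t => A *ᵥ x t + ∑ i, B i *ᵥ z i t) l (𝓝 0))
    (hz : ∀ i, Tendsto (fun t => z i t - w i t • 1) l (𝓝 0)) :
    Tendsto (fun t => x t - ∑ i, w i t • groundedWeight A B i) l (𝓝 0) := by
  have herr : Tendsto (fun t => ∑ i, B i *ᵥ (z i t - w i t • 1)) l (𝓝 0) := by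
    simpa using tendsto_finsetSum Finset.univ fun i _ => (hz i).const_matrix_mulVec (B i)
  convert (hlim.sub herr).const_matrix_mulVec A⁻¹ using 2 with t
  · rw [sub_sum_smul_groundedWeight B hA, add_sub_assoc, ← Finset.sum_sub_distrib]
    simp only [← mulVec_sub, sub_sub_cancel]
  · simp

end Grounded

theorem mulVec_inl_eq_of_blocks {n r ι : Type*} [Fintype n] [Fintype ι] {m : ι → Type*}
    [∀ i, Fintype (m i)] {L : Matrix (n ⊕ r) (n ⊕ Σ i, m i) ℝ} {A : Matrix n n ℝ}
    {B : ∀ i, Matrix n (m i) ℝ} (h11 : ∀ a b, L (.inl a) (.inl b) = A a b)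
    (h12 : ∀ a i b, L (.inl a) (.inr ⟨i, b⟩) = B i a b) (v : n ⊕ (Σ i, m i) → ℝ) :
    (fun a => (L *ᵥ v) (.inl a)) =
      A *ᵥ (fun b => v (.inl b)) + ∑ i, B i *ᵥ fun b => v (.inr ⟨i, b⟩) := by
  ext a
  simp only [mulVec, dotProduct, Fintype.sum_sum_type, Fintype.sum_sigma, h11, h12,
    Pi.add_apply, Finset.sum_apply]

end Matrix

theorem stmt_13_general {M0 k p : ℕ} {M : Fin k → ℕ}
    (L0 : Matrix (Fin M0) (Fin M0) ℝ) (hL0 : IsUnit L0.det)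
    (L0i : ∀ i : Fin k, Matrix (Fin M0) (Fin (M i)) ℝ)
    (L : Matrix (Fin M0 ⊕ (Σ i : Fin k, Fin (M i)))
                (Fin M0 ⊕ (Σ i : Fin k, Fin (M i))) ℝ)
    (hoff : ∀ a b, a ≠ b → L a b ≤ 0)
    (hrowsum : ∀ a, ∑ b, L a b = 0)
    (h11 : ∀ a b, L (Sum.inl a) (Sum.inl b) = L0 a b)
    (h12 : ∀ a i b, L (Sum.inl a) (Sum.inr ⟨i, b⟩) = L0i i a b)
    (y : ℝ≥0 → (Fin M0 ⊕ (Σ i : Fin k, Fin (M i))) → Fin p → ℝ)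
    (hweak : ∀ a, Tendsto (fun t => ∑ b, L a b • y t b) atTop (𝓝 0))
    (ys : Fin k → ℝ≥0 → Fin p → ℝ)
    (hys : ∀ i b, Tendsto (fun t => y t (Sum.inr ⟨i, b⟩) - ys i t) atTop (𝓝 0)) :
    (∀ i j, 0 ≤ (-(L0⁻¹ * L0i i)).mulVec (fun _ => 1) j) ∧
    (∀ j, ∑ i : Fin k, (-(L0⁻¹ * L0i i)).mulVec (fun _ => 1) j = 1) ∧
    (∀ j : Fin M0, Tendsto (fun t => y t (Sum.inl j) -
      ∑ i : Fin k, (-(L0⁻¹ * L0i i)).mulVec (fun _ => 1) j • ys i t)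
      atTop (𝓝 0)) := by
  have hL0off : ∀ a b, a ≠ b → L0 a b ≤ 0 := fun a b hab =>
    h11 a b ▸ hoff _ _ (Sum.inl_injective.ne hab)
  have hL0i : ∀ i a b, L0i i a b ≤ 0 := fun i a b => h12 a i b ▸ hoff _ _ Sum.inl_ne_inr
  have hblock := mulVec_inl_eq_of_blocks h11 h12
  have hrow : L0 *ᵥ 1 + ∑ i, L0i i *ᵥ 1 = 0 :=
    (hblock 1).symm.trans (funext fun a => by simpa [mulVec, dotProduct] using hrowsum (.inl a))
  refine ⟨groundedWeight_nonneg hL0 hL0off hL0i hrow, fun j => ?_, fun j => ?_⟩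
  · exact (Finset.sum_apply j _ _).symm.trans (congrFun (sum_groundedWeight hL0 hrow) j)
  refine tendsto_pi_nhds.2 fun q => ?_
  have hgrounded : Tendsto (fun t => L0 *ᵥ (fun b => y t (.inl b) q) +
      ∑ i, L0i i *ᵥ fun b => y t (.inr ⟨i, b⟩) q) atTop (𝓝 0) := by
    refine Tendsto.congr (fun t => hblock fun c => y t c q) (tendsto_pi_nhds.2 fun a => ?_)
    simpa [mulVec, dotProduct] using tendsto_pi_nhds.1 (hweak (.inl a)) q
  have hlim := tendsto_sub_sum_smul_groundedWeight (w := fun i t => ys i t q) hL0 hgrounded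
    fun i => tendsto_pi_nhds.2 fun b => by simpa using tendsto_pi_nhds.1 (hys i b) q
  simpa [groundedWeight, mul_comm, ← Pi.one_def] using tendsto_pi_nhds.1 hlim j

/-- Behavior under weak synchronization when there is no directed spanning tree
(`k ≥ 2` basic bicomponents): every agent `j` outside the basic bicomponents
converges to the convex combination `∑ᵢ β_{j,i} yˢᵢ` of the synchronized
trajectories of the basic bicomponents, where `βᵢ = -L₀⁻¹ L₀ᵢ 𝟏` is
nonnegative, sums to one over `i`, and depends only on `L`. -/
theorem stmt_13 {M0 k p : ℕ} (hk : 2 ≤ k) {M : Fin k → ℕ}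
    (L0 : Matrix (Fin M0) (Fin M0) ℝ) (hL0 : IsUnit L0.det)
    (L0i : ∀ i : Fin k, Matrix (Fin M0) (Fin (M i)) ℝ)
    (Lblk : ∀ i : Fin k, Matrix (Fin (M i)) (Fin (M i)) ℝ)
    (hLblk : ∀ i, LinearMap.ker (Matrix.toLin' (Lblk i)) =
      Submodule.span ℝ {(fun _ => 1 : Fin (M i) → ℝ)})
    (L : Matrix (Fin M0 ⊕ (Σ i : Fin k, Fin (M i)))
                (Fin M0 ⊕ (Σ i : Fin k, Fin (M i))) ℝ)
    (hoff : ∀ a b, a ≠ b → L a b ≤ 0)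
    (hrowsum : ∀ a, ∑ b, L a b = 0)
    (h11 : ∀ a b, L (Sum.inl a) (Sum.inl b) = L0 a b)
    (h12 : ∀ a i b, L (Sum.inl a) (Sum.inr ⟨i, b⟩) = L0i i a b)
    (h21 : ∀ i a b, L (Sum.inr ⟨i, a⟩) (Sum.inl b) = 0)
    (h22 : ∀ i a j b, L (Sum.inr ⟨i, a⟩) (Sum.inr ⟨j, b⟩) =
      if h : i = j then Lblk i a (h ▸ b) else 0)
    (y : ℝ≥0 → (Fin M0 ⊕ (Σ i : Fin k, Fin (M i))) → Fin p → ℝ)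
    (hweak : ∀ a, Tendsto (fun t => ∑ b, L a b • y t b) atTop (𝓝 0))
    (ys : Fin k → ℝ≥0 → Fin p → ℝ)
    (hys : ∀ i b, Tendsto (fun t => y t (Sum.inr ⟨i, b⟩) - ys i t) atTop (𝓝 0)) :
    (∀ i j, 0 ≤ (-(L0⁻¹ * L0i i)).mulVec (fun _ => 1) j) ∧
    (∀ j, ∑ i : Fin k, (-(L0⁻¹ * L0i i)).mulVec (fun _ => 1) j = 1) ∧
    (∀ j : Fin M0, Tendsto (fun t => y t (Sum.inl j) -
      ∑ i : Fin k, (-(L0⁻¹ * L0i i)).mulVec (fun _ => 1) j • ys i t)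
      atTop (𝓝 0)) :=
  stmt_13_general L0 hL0 L0i L hoff hrowsum h11 h12 y hweak ys hys
end

section
/- Suppose a graph on N nodes has k ≥ 2 basic bicomponents and a family of output trajectories achieving weak synchronization with the property that initial conditions of agents in distinct basic bicomponents can be scaled independently and the outputs depend linearly on initial conditions. If for some initial condition the synchronized trajectory y_ss of one basic bicomponent does not converge to zero, then output synchronization of the full network fails for some initial condition. -/
open Filter
open scoped NNReal Topology

/-! Scaling the initial condition of the basic bicomponent by `c` moves the limit trajectory of
its agent `a` to `c • yss` while the output of agent `j` stays put; if `a` and `j` synchronized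
for both `c = 1` and `c = 2`, the two limits would differ by `yss`, forcing `yss → 0`. -/

theorem tendsto_nhds_zero_of_smul_sub_tendsto {α 𝕜 E : Type*} [Field 𝕜] [AddCommGroup E]
    [Module 𝕜 E] [TopologicalSpace E] [IsTopologicalAddGroup E] [ContinuousConstSMul 𝕜 E]
    {l : Filter α} {y w : α → E} {c₁ c₂ : 𝕜} (hc : c₁ ≠ c₂)
    (h₁ : Tendsto (fun t => c₁ • y t - w t) l (𝓝 0))
    (h₂ : Tendsto (fun t => c₂ • y t - w t) l (𝓝 0)) :
    Tendsto y l (𝓝 0) := by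
  have hdiff := ((h₂.sub h₁).const_smul (c₂ - c₁)⁻¹)
  rw [sub_zero, smul_zero] at hdiff
  refine hdiff.congr fun t => ?_
  rw [sub_sub_sub_cancel_right, ← sub_smul, inv_smul_smul₀ (sub_ne_zero.mpr hc.symm)]

theorem stmt_15_general {n N p : ℕ}
    (Y : (Fin n → ℝ) → ℝ≥0 → Fin N → Fin p → ℝ)
    (a j : Fin N)
    (scale : ℝ → (Fin n → ℝ))
    (yss : ℝ≥0 → Fin p → ℝ)
    (hsync : ∀ c : ℝ, Tendsto (fun t => Y (scale c) t a - c • yss t) atTop (𝓝 0))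
    (hunchanged : ∀ c : ℝ, ∀ t, Y (scale c) t j = Y (scale 1) t j)
    (hss : ¬ Tendsto yss atTop (𝓝 0)) :
    ¬ (∀ x₀ : Fin n → ℝ, ∀ i i' : Fin N,
        Tendsto (fun t => Y x₀ t i - Y x₀ t i') atTop (𝓝 0)) := by
  intro hall
  have hscaled : ∀ c : ℝ,
      Tendsto (fun t => c • yss t - Y (scale 1) t j) atTop (𝓝 0) := fun c => by
    have h := (hall (scale c) a j).sub (hsync c)
    rw [sub_zero] at h
    refine h.congr fun t => ?_
    rw [sub_sub_sub_cancel_left, hunchanged]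
  exact hss (tendsto_nhds_zero_of_smul_sub_tendsto (by norm_num : (1 : ℝ) ≠ 2) (hscaled 1) (hscaled 2))

/-- If, in a linear MAS with `k ≥ 2` basic bicomponents, the initial condition
of one basic bicomponent can be scaled independently (scaling its synchronized
trajectory `yss` while leaving the output of an agent `j` of another basic
bicomponent unchanged) and `yss ↛ 0`, then output synchronization fails for
some initial condition.  Here `Y x₀ t i` is the output of agent `i` at time `t`
from initial condition `x₀`. -/
theorem stmt_15 {n N p : ℕ}
    (Y : (Fin n → ℝ) → ℝ≥0 → Fin N → Fin p → ℝ)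
    (a j : Fin N) (haj : a ≠ j)
    (scale : ℝ → (Fin n → ℝ))
    (yss : ℝ≥0 → Fin p → ℝ)
    (hsync : ∀ c : ℝ, Tendsto (fun t => Y (scale c) t a - c • yss t) atTop (𝓝 0))
    (hunchanged : ∀ c : ℝ, ∀ t, Y (scale c) t j = Y (scale 1) t j)
    (hss : ¬ Tendsto yss atTop (𝓝 0)) :
    ¬ (∀ x₀ : Fin n → ℝ, ∀ i i' : Fin N,
        Tendsto (fun t => Y x₀ t i - Y x₀ t i') atTop (𝓝 0)) :=
  stmt_15_general Y a j scale yss hsync hunchanged hss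
end
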